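/- Let z > 0 be real, k ≥ 1 and N ≥ 0 be integers, and ε be a complex number with ε + j ≠ 0 for every integer j ≥ 1; set ν = N + ε. Then the k-th derivative of ν ↦ J_ν(z) at ν equals k!·(z/2)^ν · ∑_{m=0}^∞ [(−z²/4)^m/m!] · ∑_{k₁=0}^{k} ([log(z/2)]^{k₁}/k₁!) · ∑_{k₂=0}^{k−k₁} [G^{(k₂)}(1+ε)/k₂!] · Q_{m+N}^{(k−k₁−k₂)}(1+ε). -/

import Mathlib

open scoped BigOperators

/-- The reciprocal of the complex Gamma function, an entire function
(Mathlib's `Complex.Gamma` vanishes at nonpositive integers, so the inverse is `0` there). -/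
noncomputable def Grec (t : ℂ) : ℂ := (Complex.Gamma t)⁻¹

/-- `G k t` is the `k`-th derivative of the reciprocal Gamma function at `t`. -/
noncomputable def G (k : ℕ) (t : ℂ) : ℂ := iteratedDeriv k Grec t

/-- The Maclaurin coefficients of `1/Γ`: `c j = G^{(j)}(0)/j!`. -/
noncomputable def mcCoeff (j : ℕ) : ℂ := iteratedDeriv j Grec 0 / (j.factorial : ℂ)

/-- Bessel function of the first kind `J_ν(z)` for real `z > 0` and complex order `ν`,
with `(z/2)^ν = exp (ν log (z/2))`. -/
noncomputable def besselJ (z : ℝ) (ν : ℂ) : ℂ :=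
  Complex.exp (ν * Complex.log ((z : ℂ) / 2)) *
    ∑' m : ℕ, (-(z : ℂ) ^ 2 / 4) ^ m / ((m.factorial : ℂ) * Complex.Gamma (ν + 1 + m))

/-- Pochhammer symbol `(t)_m = t (t+1) ⋯ (t+m-1)`. -/
noncomputable def poch (t : ℂ) (m : ℕ) : ℂ := ∏ i ∈ Finset.range m, (t + i)

/-- `P m k t = (1/k!) dᵏ/dtᵏ (t)_m`. -/
noncomputable def P (m k : ℕ) (t : ℂ) : ℂ :=
  ((k.factorial : ℂ))⁻¹ * iteratedDeriv k (fun s => poch s m) t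

/-- `Q m k t = (1/k!) dᵏ/dtᵏ (1/(t)_m)`. -/
noncomputable def Q (m k : ℕ) (t : ℂ) : ℂ :=
  ((k.factorial : ℂ))⁻¹ * iteratedDeriv k (fun s => (poch s m)⁻¹) t

/-- Signed Stirling numbers of the first kind: `s(n,k)` is the coefficient of `x^k`
in `x(x-1)⋯(x-n+1)`. -/
noncomputable def stirS (n k : ℕ) : ℤ := (descPochhammer ℤ n).coeff k

/-- Modified generalized harmonic numbers `Ĥ_m^{(k)}`. -/
noncomputable def Hhat (m k : ℕ) : ℝ :=
  if m = 0 then (if k = 0 then 1 else 0)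
  else ∑ j ∈ Finset.Icc 1 m, (-1 : ℝ) ^ (j - 1) * (m.choose j) / (j : ℝ) ^ k

/-- Digamma function `ψ = Γ'/Γ`. -/
noncomputable def digamma (t : ℂ) : ℂ := deriv Complex.Gamma t / Complex.Gamma t

/-!
Near `ν = N + ε` the factors of `(ν - N + 1)_{m+N}` stay away from `0`, so the Gamma recurrence
gives `1/Γ(ν + 1 + m) = 1/Γ(ν - N + 1) · 1/(ν - N + 1)_{m+N}` there. Each term of the series is
then a product of `(z/2)^ν`, `1/Γ(ν - N + 1)` and `1/(ν - N + 1)_{m+N}`, and the Leibniz rule,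
written for Taylor coefficients, turns its `k`-th derivative into the double convolution of the
statement. Termwise differentiation is justified by Weierstrass' theorem: `1/Γ(ν + m)` is bounded
uniformly in `m` for `ν` in a ball (for large `m` it is `1/Γ` on a compact set divided by a
Pochhammer symbol all of whose factors have real part `≥ 1`), so the series converges locally
uniformly.
-/

open Complex Filter Finset
open scoped Nat

section Weierstrass

variable {E : Type*} [NormedAddCommGroup E] [NormedSpace ℂ E] [CompleteSpace E]
  {ι : Type*} {U : Set ℂ}

theorem TendstoLocallyUniformlyOn.iteratedDeriv {l : Filter ι} {F : ι → ℂ → E} {f : ℂ → E}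
    (hf : TendstoLocallyUniformlyOn F f l U) (hF : ∀ᶠ n in l, DifferentiableOn ℂ (F n) U)
    (hU : IsOpen U) (k : ℕ) :
    TendstoLocallyUniformlyOn (fun n => iteratedDeriv k (F n)) (iteratedDeriv k f) l U := by
  induction k with
  | zero => simpa using hf
  | succ k ih =>
    simp only [iteratedDeriv_succ]
    refine ih.deriv ?_ hU
    filter_upwards [hF] with n hn
    simpa only [iteratedDeriv_eq_iterate] using
      ((hn.analyticOnNhd hU).iterated_deriv k).differentiableOn

theorem Complex.hasSum_iteratedDeriv_of_summable_norm {F : ι → ℂ → E} {u : ι → ℝ}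
    (hu : Summable u) (hf : ∀ i, DifferentiableOn ℂ (F i) U) (hU : IsOpen U)
    (hF_le : ∀ i, ∀ w ∈ U, ‖F i w‖ ≤ u i) {z : ℂ} (hz : z ∈ U) (k : ℕ) :
    HasSum (fun i => iteratedDeriv k (F i) z) (iteratedDeriv k (fun w => ∑' i, F i w) z) := by
  have hc := (tendstoUniformlyOn_tsum hu hF_le).tendstoLocallyUniformlyOn
  rw [HasSum]
  convert! (hc.iteratedDeriv (Eventually.of_forall fun s => DifferentiableOn.fun_sum
    fun i _ => hf i) hU k).tendsto_at hz using 1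
  ext s
  exact (iteratedDeriv_fun_sum fun i _ => ((hf i).contDiffOn hU).contDiffAt (hU.mem_nhds hz)).symm

end Weierstrass

theorem iteratedDeriv_fun_mul_eq_factorial_mul_sum {𝕜 : Type*} [NontriviallyNormedField 𝕜]
    [CharZero 𝕜] {f g : 𝕜 → 𝕜} {x : 𝕜} {n : ℕ} (hf : ContDiffAt 𝕜 n f x)
    (hg : ContDiffAt 𝕜 n g x) :
    iteratedDeriv n (fun y => f y * g y) x = n ! * ∑ i ∈ range (n + 1),
      iteratedDeriv i f x / i ! * (iteratedDeriv (n - i) g x / (n - i) !) := by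
  rw [iteratedDeriv_fun_mul hf hg, mul_sum]
  refine sum_congr rfl fun i hi => ?_
  rw [Nat.cast_choose 𝕜 (mem_range_succ_iff.mp hi)]
  field_simp

theorem differentiable_poch (n : ℕ) : Differentiable ℂ (fun s => poch s n) := by
  unfold poch
  fun_prop

theorem one_le_norm_poch {s : ℂ} (hs : 1 ≤ s.re) (n : ℕ) : 1 ≤ ‖poch s n‖ := by
  rw [poch, norm_prod]
  refine one_le_prod fun i _ => hs.trans ?_
  calc s.re ≤ (s + i).re := by simp
    _ ≤ ‖s + i‖ := re_le_norm _

@[fun_prop]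
theorem differentiable_Grec : Differentiable ℂ Grec := differentiable_one_div_Gamma

theorem Grec_eq_poch_mul_Grec_add_nat (s : ℂ) (n : ℕ) : Grec s = poch s n * Grec (s + n) := by
  induction n with
  | zero => simp [poch]
  | succ n ih =>
    rw [ih, Grec, one_div_Gamma_eq_self_mul_one_div_Gamma_add_one (s + n), poch, poch,
      prod_range_succ, Grec]
    push_cast
    ring_nf

theorem exists_bound_norm_Grec_add_nat (R : ℝ) :
    ∃ C, ∀ ν : ℂ, ‖ν‖ ≤ R → ∀ m : ℕ, ‖Grec (ν + m)‖ ≤ C := by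
  set M : ℕ := ⌈R⌉₊ + 1
  obtain ⟨C, hC⟩ := (isCompact_closedBall (0 : ℂ) (R + M)).exists_bound_of_continuousOn
    differentiable_Grec.continuous.continuousOn
  have hM : R + 1 ≤ M := by push_cast [M]; linarith [Nat.le_ceil R]
  refine ⟨C, fun ν hν m => ?_⟩
  have hball : ∀ j ≤ M, ‖Grec (ν + j)‖ ≤ C := fun j hj => hC _ <| by
    rw [mem_closedBall_zero_iff]
    calc ‖ν + j‖ ≤ ‖ν‖ + j := by simpa using norm_add_le ν j
      _ ≤ R + M := by gcongr
  rcases le_or_gt m M with hm | hm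
  · exact hball m hm
  -- beyond `M`, each factor of `poch (ν + M) (m - M)` has real part at least `1`
  have hre : 1 ≤ (ν + M).re := by
    have := neg_le_of_abs_le ((abs_re_le_norm ν).trans hν)
    simp only [add_re, natCast_re]
    linarith
  have hsplit := Grec_eq_poch_mul_Grec_add_nat (ν + M) (m - M)
  rw [Nat.cast_sub hm.le, add_add_sub_cancel] at hsplit
  calc ‖Grec (ν + m)‖ ≤ ‖poch (ν + M) (m - M)‖ * ‖Grec (ν + m)‖ :=
        le_mul_of_one_le_left (norm_nonneg _) (one_le_norm_poch hre _)
    _ = ‖Grec (ν + M)‖ := by rw [hsplit, norm_mul]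
    _ ≤ C := hball M le_rfl

theorem iteratedDeriv_Grec_add_nat {s : ℂ} {n : ℕ} (hs : poch s n ≠ 0) (j : ℕ) :
    iteratedDeriv j (fun t => Grec (t + n)) s =
      j ! * ∑ i ∈ range (j + 1), G i s / i ! * Q n (j - i) s := by
  have hpoch := differentiable_poch n
  have hev : (fun t => Grec (t + n)) =ᶠ[nhds s] fun t => Grec t * (poch t n)⁻¹ := by
    filter_upwards [hpoch.continuous.continuousAt.eventually_ne hs] with t ht
    rw [Grec_eq_poch_mul_Grec_add_nat t n, mul_comm (poch t n), mul_inv_cancel_right₀ ht]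
  have hinv : ContDiffAt ℂ j (fun t => (poch t n)⁻¹) s := hpoch.contDiff.contDiffAt.inv hs
  rw [hev.iteratedDeriv_eq, iteratedDeriv_fun_mul_eq_factorial_mul_sum
    differentiable_Grec.contDiff.contDiffAt hinv]
  simp only [G, Q, div_eq_inv_mul, mul_comm]

theorem iteratedDeriv_cexp_mul_Grec_add_nat (L : ℂ) (N m k : ℕ) {ε : ℂ}
    (hε : ∀ j : ℕ, 1 ≤ j → ε + (j : ℂ) ≠ 0) :
    iteratedDeriv k (fun ν => cexp (ν * L) * Grec (ν + 1 + m)) (N + ε) =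
      k ! * cexp ((N + ε) * L) * ∑ k1 ∈ range (k + 1), L ^ k1 / k1 ! *
        ∑ k2 ∈ range (k - k1 + 1), G k2 (1 + ε) / k2 ! * Q (m + N) (k - k1 - k2) (1 + ε) := by
  have hpoch : poch (1 + ε) (m + N) ≠ 0 := prod_ne_zero_iff.2 fun i _ => by
    simpa [add_comm, add_left_comm] using hε (i + 1) (by omega)
  -- the shift `ν ↦ ν + 1 - N` moves `N + ε` to `1 + ε`
  have hshift : (fun ν => Grec (ν + 1 + m)) = fun ν => Grec (ν + (1 - N) + ↑(m + N)) := by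
    funext ν; push_cast; ring_nf
  have hexp : (fun ν => cexp (ν * L)) = fun ν => cexp (L * ν) := by simp only [mul_comm]
  have hGrec : Differentiable ℂ fun ν : ℂ => Grec (ν + 1 + m) := by fun_prop
  rw [iteratedDeriv_fun_mul_eq_factorial_mul_sum (by fun_prop) hGrec.contDiff.contDiffAt,
    mul_assoc]
  congr 1
  rw [mul_sum]
  refine sum_congr rfl fun k1 _ => ?_
  rw [hexp, iteratedDeriv_cexp_const_mul, hshift,
    iteratedDeriv_comp_add_const _ (fun t => Grec (t + ↑(m + N)))]
  beta_reduce
  rw [show (N : ℂ) + ε + (1 - N) = 1 + ε by ring, iteratedDeriv_Grec_add_nat hpoch,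
    mul_comm L (N + ε), mul_div_cancel_left₀ _ (Nat.cast_ne_zero.2 (Nat.factorial_ne_zero _))]
  ring

theorem exists_summable_bound_besselJ_term (A L : ℂ) (R : ℝ) :
    ∃ u : ℕ → ℝ, Summable u ∧ ∀ m : ℕ, ∀ ν ∈ Metric.ball (0 : ℂ) R,
      ‖A ^ m / m ! * (cexp (ν * L) * Grec (ν + 1 + m))‖ ≤ u m := by
  obtain ⟨C, hC⟩ := exists_bound_norm_Grec_add_nat (R + 1)
  refine ⟨fun m => ‖A‖ ^ m / m ! * (Real.exp (R * ‖L‖) * C),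
    (Real.summable_pow_div_factorial ‖A‖).mul_right _, fun m ν hν => ?_⟩
  rw [mem_ball_zero_iff] at hν
  have hexp : ‖cexp (ν * L)‖ ≤ Real.exp (R * ‖L‖) :=
    (norm_exp_le_exp_norm _).trans <| Real.exp_le_exp.2 <| by
      rw [norm_mul]; gcongr
  have hGrec : ‖Grec (ν + 1 + m)‖ ≤ C :=
    hC (ν + 1) ((norm_add_le ν 1).trans (by rw [norm_one]; linarith)) m
  rw [norm_mul, norm_mul, norm_div, norm_pow, norm_natCast]
  beta_reduce
  gcongr

theorem iteratedDeriv_besselJ_N_nonneg_general (z : ℝ) (k : ℕ)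
    (N : ℕ) (ε : ℂ) (hε : ∀ j : ℕ, 1 ≤ j → ε + (j : ℂ) ≠ 0) :
    iteratedDeriv k (fun ν => besselJ z ν) ((N : ℂ) + ε) =
      (k.factorial : ℂ) * Complex.exp (((N : ℂ) + ε) * Complex.log ((z : ℂ) / 2)) *
        ∑' m : ℕ, ((-(z : ℂ) ^ 2 / 4) ^ m / (m.factorial : ℂ) *
          ∑ k1 ∈ Finset.range (k + 1),
            (Complex.log ((z : ℂ) / 2)) ^ k1 / (k1.factorial : ℂ) *
              ∑ k2 ∈ Finset.range (k - k1 + 1),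
                G k2 (1 + ε) / (k2.factorial : ℂ) * Q (m + N) (k - k1 - k2) (1 + ε)) := by
  set L := Complex.log ((z : ℂ) / 2)
  set A := -(z : ℂ) ^ 2 / 4
  have hJ : (fun ν => besselJ z ν) =
      fun ν => ∑' m : ℕ, A ^ m / m ! * (cexp (ν * L) * Grec (ν + 1 + m)) := by
    funext ν
    rw [besselJ, ← tsum_mul_left]
    refine tsum_congr fun m => ?_
    rw [Grec]
    ring
  obtain ⟨u, hu, hbound⟩ := exists_summable_bound_besselJ_term A L (‖(N : ℂ) + ε‖ + 1)
  have hsum := hasSum_iteratedDeriv_of_summable_norm hu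
    (fun m => Differentiable.differentiableOn (by fun_prop)) Metric.isOpen_ball hbound
    (mem_ball_zero_iff.2 (lt_add_one _)) k
  rw [hJ, ← hsum.tsum_eq, ← tsum_mul_left]
  refine tsum_congr fun m => ?_
  rw [iteratedDeriv_const_mul_field, iteratedDeriv_cexp_mul_Grec_add_nat L N m k hε]
  ring

/-- For `z > 0`, `k ≥ 1`, `N ≥ 0`, `ν = N + ε` with `ε + j ≠ 0` for all integers `j ≥ 1`:
`∂ᵏ/∂νᵏ J_ν(z) = k! (z/2)^ν ∑ₘ (−z²/4)ᵐ/m! ∑_{k₁=0}^{k} [log(z/2)]^{k₁}/k₁!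
∑_{k₂=0}^{k−k₁} G^{(k₂)}(1+ε)/k₂! · Q_{m+N}^{(k−k₁−k₂)}(1+ε)`. -/
theorem iteratedDeriv_besselJ_N_nonneg (z : ℝ) (hz : 0 < z) (k : ℕ) (hk : 1 ≤ k)
    (N : ℕ) (ε : ℂ) (hε : ∀ j : ℕ, 1 ≤ j → ε + (j : ℂ) ≠ 0) :
    iteratedDeriv k (fun ν => besselJ z ν) ((N : ℂ) + ε) =
      (k.factorial : ℂ) * Complex.exp (((N : ℂ) + ε) * Complex.log ((z : ℂ) / 2)) *
        ∑' m : ℕ, ((-(z : ℂ) ^ 2 / 4) ^ m / (m.factorial : ℂ) *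
          ∑ k1 ∈ Finset.range (k + 1),
            (Complex.log ((z : ℂ) / 2)) ^ k1 / (k1.factorial : ℂ) *
              ∑ k2 ∈ Finset.range (k - k1 + 1),
                G k2 (1 + ε) / (k2.factorial : ℂ) * Q (m + N) (k - k1 - k2) (1 + ε)) :=
  iteratedDeriv_besselJ_N_nonneg_general z k N ε hε
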